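/- arXiv:1208.3058 — 2 statements merged into one kernel-verified Lean document; each statement's English description precedes it below -/
import Mathlib

section
/- Fix 0 < q < 1/2 and a set {r_α : α < 𝔠} of reals greater than 1 that is linearly independent over ℚ. Then the sequences x_α(n) = q^{r_α n} freely generate a subalgebra of ℓ¹ (under pointwise operations) every nonzero element of which has achievement set homeomorphic to the Cantor set. In particular, the set 𝒞 = {x ∈ ℓ¹ \ c₀₀ : E(x) is homeomorphic to the Cantor set} is strongly 𝔠-algebrable. -/
open Set Filter Topology

/-- The achievement set (set of all subsums) of a series `∑ x n`. -/
noncomputable def achSet (x : ℕ → ℝ) : Set ℝ :=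
  {a : ℝ | ∃ A : Set ℕ, HasSum (fun n : A => x n) a}

/-- The tail sum `∑_{i > n} |x i|`. -/
noncomputable def tailSum (x : ℕ → ℝ) (n : ℕ) : ℝ := ∑' i : ℕ, |x (n + 1 + i)|

/-- `S` is a finite union of closed intervals. -/
def IsFinUnionClosedIntervals (S : Set ℝ) : Prop :=
  ∃ s : Finset (ℝ × ℝ), S = ⋃ p ∈ s, Set.Icc p.1 p.2

/-- `S` is homeomorphic to the Cantor set (the Cantor space `ℕ → Bool`). -/
def CantorLike (S : Set ℝ) : Prop := Nonempty (S ≃ₜ (ℕ → Bool))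

/-- Sequences which are not eventually zero. -/
def NotEventuallyZero (x : ℕ → ℝ) : Prop := ∀ N : ℕ, ∃ n ≥ N, x n ≠ 0

/-- The set `𝒞` of absolutely summable, not eventually zero sequences whose
achievement set is homeomorphic to the Cantor set. -/
def mathcalC : Set (ℕ → ℝ) :=
  {x | (Summable fun n => |x n|) ∧ NotEventuallyZero x ∧ CantorLike (achSet x)}

/-- `M` is strongly `𝔠`-algebrable in the algebra `ℕ → ℝ` (pointwise operations):
`M ∪ {0}` contains a free commutative algebra on continuum many generators; freeness
is expressed by the standard criterion that every nonzero polynomial without constant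
term, evaluated at the generators, lands in `M` (note `0 ∉ M` for the sets considered,
so such evaluations are nonzero and the generators are free). -/
def StronglyContinuumAlgebrable (M : Set (ℕ → ℝ)) : Prop :=
  ∃ (ι : Type) (y : ι → ℕ → ℝ), Cardinal.mk ι = Cardinal.continuum ∧
    ∀ P : MvPolynomial ι ℝ, P ≠ 0 → MvPolynomial.constantCoeff P = 0 →
      MvPolynomial.aeval y P ∈ M

/-!
For an absolutely summable `x`, the subsum map `(ℕ → Bool) → ℝ` is continuous with image
`E(x)`, so `E(x)` is compact. If `x` is not eventually zero, flipping one far-out nonzero term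
moves a subsum by a small nonzero amount, so `E(x)` has no isolated points. If moreover
`|x n| ≤ K θ ^ n` with `θ < 1/2`, the `2 ^ (n + 1)` partial subsums over `{0, …, n}` cover `E(x)`
by intervals of total length `O((2θ) ^ n)`, so `E(x)` is null and has empty interior.

A nonempty compact subset of `ℝ` without isolated points and with empty interior is homeomorphic
to the Cantor space: cutting it again and again at a point of its complement in the middle half
of its convex hull yields a Cantor scheme whose diameters shrink by a factor `3/4` at each step.

Evaluated at the generators, a polynomial `P` without constant term is `n ↦ ∑ₘ cₘ tₘ ^ n` with
`tₘ = q ^ (∑ᵢ mᵢ rᵢ) ≤ q < 1/2`. Linear independence of the `rᵢ` over `ℚ` makes the `tₘ`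
distinct, and then Dedekind's independence of the characters `n ↦ tₘ ^ n` of `ℕ` shows that
the sum is not eventually zero.
-/

open scoped ENNReal

open MeasureTheory

-- Brouwer's characterization of the Cantor set, specialised to subsets of `ℝ`, where having
-- empty interior is what total disconnectedness amounts to.
structure IsBrouwerSet (S : Set ℝ) : Prop where
  nonempty : S.Nonempty
  isCompact : IsCompact S
  preperfect : Preperfect S
  interior_eq_empty : interior S = ∅

def IsMiddleGap (S : Set ℝ) (c : ℝ) : Prop :=
  c ∉ S ∧ c ∈ Ioo (sInf S + (sSup S - sInf S) / 4) (sSup S - (sSup S - sInf S) / 4)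

noncomputable def middleGap (S : Set ℝ) : ℝ := Classical.epsilon (IsMiddleGap S)

def gapHalf (S : Set ℝ) (b : Bool) : Set ℝ := {x ∈ S | decide (middleGap S < x) = b}

noncomputable def gapScheme (S : Set ℝ) : List Bool → Set ℝ
  | [] => S
  | b :: l => gapHalf (gapScheme S l) b

theorem disjoint_gapScheme (S : Set ℝ) : CantorScheme.Disjoint (gapScheme S) :=
  fun _ _ _ h => Set.disjoint_left.mpr fun _ hx hx' => h (hx.2.symm.trans hx'.2)

section BrouwerSet

variable {S : Set ℝ}

theorem IsBrouwerSet.sInf_lt_sSup (hS : IsBrouwerSet S) : sInf S < sSup S := by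
  obtain ⟨a, ha⟩ := hS.nonempty
  obtain ⟨b, ⟨-, hb⟩, hba⟩ := accPt_iff_nhds.mp (hS.preperfect a ha) univ univ_mem
  have hbdd := hS.isCompact.isBounded
  rcases hba.lt_or_gt with h | h
  · exact (csInf_le hbdd.bddBelow hb).trans_lt (h.trans_le (le_csSup hbdd.bddAbove ha))
  · exact (csInf_le hbdd.bddBelow ha).trans_lt (h.trans_le (le_csSup hbdd.bddAbove hb))

theorem IsBrouwerSet.isMiddleGap_middleGap (hS : IsBrouwerSet S) : IsMiddleGap S (middleGap S) := by
  refine Classical.epsilon_spec (not_forall_not.mp fun h => ?_)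
  have hsub : Ioo _ _ ⊆ interior S :=
    isOpen_Ioo.subset_interior_iff.mpr fun c hc => not_not.mp fun hcS => h c ⟨hcS, hc⟩
  rw [hS.interior_eq_empty, subset_empty_iff, Ioo_eq_empty_iff] at hsub
  linarith [hS.sInf_lt_sSup]

theorem IsBrouwerSet.middleGap_ne_of_mem (hS : IsBrouwerSet S) {x : ℝ} (hx : x ∈ S) :
    middleGap S ≠ x :=
  fun h => hS.isMiddleGap_middleGap.1 (h ▸ hx)

theorem IsBrouwerSet.gapHalf_eq_inter_closed (hS : IsBrouwerSet S) (b : Bool) :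
    gapHalf S b = S ∩ if b then Ici (middleGap S) else Iic (middleGap S) := by
  ext x
  refine and_congr_right fun hx => ?_
  have hne := hS.middleGap_ne_of_mem hx
  cases b <;> simp [hne.le_iff_lt, hne.symm.le_iff_lt]

theorem IsBrouwerSet.gapHalf_eq_inter_open (hS : IsBrouwerSet S) (b : Bool) :
    gapHalf S b = S ∩ if b then Ioi (middleGap S) else Iio (middleGap S) := by
  ext x
  refine and_congr_right fun hx => ?_
  cases b <;> simp [(hS.middleGap_ne_of_mem hx).symm.le_iff_lt]

theorem IsBrouwerSet.ediam_gapHalf_le (hS : IsBrouwerSet S) (b : Bool) :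
    Metric.ediam (gapHalf S b) ≤ 3 / 4 * Metric.ediam S := by
  have hbdd := hS.isCompact.isBounded
  have h34 : (3 / 4 : ℝ≥0∞) = ENNReal.ofReal (3 / 4) := by
    rw [ENNReal.ofReal_div_of_pos (by norm_num)]; norm_num
  rw [Real.ediam_eq hbdd, h34, ← ENNReal.ofReal_mul (by norm_num)]
  refine Metric.ediam_le_of_forall_dist_le fun x hx y hy => ?_
  have hgap := hS.isMiddleGap_middleGap.2
  have bounds : ∀ z ∈ S, sInf S ≤ z ∧ z ≤ sSup S :=
    fun z hz => ⟨csInf_le hbdd.bddBelow hz, le_csSup hbdd.bddAbove hz⟩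
  obtain ⟨hx1, hx2⟩ := bounds x hx.1
  obtain ⟨hy1, hy2⟩ := bounds y hy.1
  have hx' := hx.2
  have hy' := hy.2
  rw [Real.dist_eq, abs_le]
  cases b <;> simp only [decide_eq_false_iff_not, decide_eq_true_eq, not_lt] at hx' hy' <;>
    constructor <;> linarith [hgap.1, hgap.2]

theorem isBrouwerSet_gapHalf (hS : IsBrouwerSet S) (b : Bool) : IsBrouwerSet (gapHalf S b) where
  nonempty := by
    have hgap := hS.isMiddleGap_middleGap.2
    cases b
    · refine ⟨sInf S, hS.isCompact.sInf_mem hS.nonempty, ?_⟩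
      simp only [decide_eq_false_iff_not, not_lt]
      linarith [hgap.1, hS.sInf_lt_sSup]
    · refine ⟨sSup S, hS.isCompact.sSup_mem hS.nonempty, ?_⟩
      simp only [decide_eq_true_eq]
      linarith [hgap.2, hS.sInf_lt_sSup]
  isCompact := by
    rw [hS.gapHalf_eq_inter_closed]
    exact hS.isCompact.inter_right (by cases b <;> simp [isClosed_Ici, isClosed_Iic])
  preperfect := by
    rw [hS.gapHalf_eq_inter_open, inter_comm]
    exact hS.preperfect.open_inter (by cases b <;> simp [isOpen_Ioi, isOpen_Iio])
  interior_eq_empty := subset_empty_iff.mp <| hS.interior_eq_empty ▸ interior_mono (sep_subset _ _)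

theorem isBrouwerSet_gapScheme (hS : IsBrouwerSet S) (l : List Bool) :
    IsBrouwerSet (gapScheme S l) := by
  induction l with
  | nil => exact hS
  | cons b l ih => exact isBrouwerSet_gapHalf ih b

theorem IsBrouwerSet.ediam_gapScheme_le (hS : IsBrouwerSet S) (l : List Bool) :
    Metric.ediam (gapScheme S l) ≤ (3 / 4) ^ l.length * Metric.ediam S := by
  induction l with
  | nil => simp [gapScheme]
  | cons b l ih =>
    calc Metric.ediam (gapScheme S (b :: l))
        ≤ 3 / 4 * Metric.ediam (gapScheme S l) := (isBrouwerSet_gapScheme hS l).ediam_gapHalf_le b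
      _ ≤ 3 / 4 * ((3 / 4) ^ l.length * Metric.ediam S) := by gcongr
      _ = (3 / 4) ^ (b :: l).length * Metric.ediam S := by rw [List.length_cons, pow_succ']; ring

theorem IsBrouwerSet.vanishingDiam_gapScheme (hS : IsBrouwerSet S) :
    CantorScheme.VanishingDiam (gapScheme S) := by
  intro x
  have h34 : (3 / 4 : ℝ≥0∞) < 1 := ENNReal.div_lt_of_lt_mul (by norm_num)
  have hlim : Tendsto (fun n : ℕ => (3 / 4 : ℝ≥0∞) ^ n * Metric.ediam S) atTop (𝓝 0) := by
    simpa using ENNReal.Tendsto.mul_const (ENNReal.tendsto_pow_atTop_nhds_zero_of_lt_one h34)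
      (Or.inr hS.isCompact.isBounded.ediam_ne_top)
  refine tendsto_of_tendsto_of_tendsto_of_le_of_le tendsto_const_nhds hlim (fun _ => zero_le)
    fun n => ?_
  simpa [PiNat.res_length] using hS.ediam_gapScheme_le (PiNat.res x n)

end BrouwerSet

noncomputable def gapTrail (S : Set ℝ) (a : ℝ) : ℕ → List Bool
  | 0 => []
  | n + 1 => decide (middleGap (gapScheme S (gapTrail S a n)) < a) :: gapTrail S a n

noncomputable def gapAddress (S : Set ℝ) (a : ℝ) (n : ℕ) : Bool :=
  decide (middleGap (gapScheme S (gapTrail S a n)) < a)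

theorem res_gapAddress (S : Set ℝ) (a : ℝ) (n : ℕ) :
    PiNat.res (gapAddress S a) n = gapTrail S a n := by
  induction n with
  | zero => rfl
  | succ n ih => rw [PiNat.res_succ, ih]; rfl

theorem mem_gapScheme_gapTrail {S : Set ℝ} {a : ℝ} (ha : a ∈ S) (n : ℕ) :
    a ∈ gapScheme S (gapTrail S a n) := by
  induction n with
  | zero => exact ha
  | succ n ih => exact ⟨ih, rfl⟩

open CantorScheme in
theorem IsBrouwerSet.cantorLike {S : Set ℝ} (hS : IsBrouwerSet S) : CantorLike S := by
  have hdiam := hS.vanishingDiam_gapScheme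
  have hdom : (inducedMap (gapScheme S)).1 = univ :=
    (Antitone.closureAntitone (fun _ _ => sep_subset _ _)
      fun l => (isBrouwerSet_gapScheme hS l).isCompact.isClosed).map_of_vanishingDiam hdiam
      fun l => (isBrouwerSet_gapScheme hS l).nonempty
  let x' (x : ℕ → Bool) : (inducedMap (gapScheme S)).1 := ⟨x, hdom ▸ mem_univ x⟩
  let f (x : ℕ → Bool) : S := ⟨(inducedMap (gapScheme S)).2 (x' x), map_mem (x' x) 0⟩
  have hf_cont : Continuous f :=
    (hdiam.map_continuous.comp (continuous_id.subtype_mk _)).subtype_mk _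
  have hf_inj : Function.Injective f := fun x y h =>
    congrArg Subtype.val ((disjoint_gapScheme S).map_injective (congrArg Subtype.val h) :
      x' x = x' y)
  have hf_surj : Function.Surjective f := by
    rintro ⟨a, ha⟩
    refine ⟨gapAddress S a, Subtype.ext <| not_not.mp fun hne => ?_⟩
    obtain ⟨n, hn⟩ := hdiam.dist_lt _ (dist_pos.mpr hne) (gapAddress S a)
    refine (hn _ (map_mem _ n) a ?_).false
    rw [res_gapAddress]
    exact mem_gapScheme_gapTrail ha n
  exact ⟨(hf_cont.homeoOfEquivCompactToT2 (f := Equiv.ofBijective f ⟨hf_inj, hf_surj⟩)).symm⟩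

noncomputable def subsum (x : ℕ → ℝ) (χ : ℕ → Bool) : ℝ := ∑' n, if χ n then x n else 0

section AchievementSet

variable {x : ℕ → ℝ}

theorem summable_ite_of_summable_abs (hx : Summable fun n => |x n|) (χ : ℕ → Bool) :
    Summable fun n => if χ n then x n else 0 :=
  hx.of_norm_bounded fun n => by by_cases h : χ n <;> simp [h]

theorem achSet_eq_range_subsum (hx : Summable fun n => |x n|) : achSet x = range (subsum x) := by
  classical
  ext a
  simp only [achSet, mem_ofPred_eq, mem_range, subsum]
  constructor
  · rintro ⟨A, hA⟩
    refine ⟨fun n => decide (n ∈ A), (hasSum_subtype_iff_indicator.mp hA).tsum_eq ▸ ?_⟩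
    congr 1
    ext n
    by_cases h : n ∈ A <;> simp [h]
  · rintro ⟨χ, rfl⟩
    refine ⟨{n | χ n}, hasSum_subtype_iff_indicator.mpr ?_⟩
    convert (summable_ite_of_summable_abs hx χ).hasSum using 1
    ext n
    by_cases h : χ n <;> simp [h]

theorem continuous_subsum (hx : Summable fun n => |x n|) : Continuous (subsum x) :=
  continuous_tsum (fun n => (continuous_of_discreteTopology (f := fun b : Bool =>
      if b then x n else 0)).comp (continuous_apply n)) hx
    fun n χ => by by_cases h : χ n <;> simp [h]

theorem isCompact_achSet (hx : Summable fun n => |x n|) : IsCompact (achSet x) :=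
  achSet_eq_range_subsum hx ▸ isCompact_range (continuous_subsum hx)

theorem zero_mem_achSet (x : ℕ → ℝ) : (0 : ℝ) ∈ achSet x := ⟨∅, hasSum_empty⟩

theorem abs_subsum_update_not_sub (hx : Summable fun n => |x n|) (χ : ℕ → Bool) (m : ℕ) :
    |subsum x (Function.update χ m (!χ m)) - subsum x χ| = |x m| := by
  rw [subsum, subsum, ← (summable_ite_of_summable_abs hx _).tsum_sub
    (summable_ite_of_summable_abs hx χ), tsum_eq_single m fun n hn => by simp [hn]]
  cases χ m <;> simp

theorem preperfect_achSet (hx : Summable fun n => |x n|) (hnz : NotEventuallyZero x) :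
    Preperfect (achSet x) := by
  rw [achSet_eq_range_subsum hx]
  rintro _ ⟨χ, rfl⟩
  refine accPt_iff_nhds.mpr fun U hU => ?_
  obtain ⟨ε, hε, hball⟩ := Metric.mem_nhds_iff.mp hU
  have hsmall : ∀ᶠ n in atTop, |x n| < ε :=
    hx.tendsto_atTop_zero.eventually (gt_mem_nhds hε)
  obtain ⟨N, hN⟩ := eventually_atTop.mp hsmall
  obtain ⟨m, hmN, hm⟩ := hnz N
  have hflip := abs_subsum_update_not_sub hx χ m
  refine ⟨subsum x (Function.update χ m (!χ m)), ⟨hball ?_, mem_range_self _⟩, fun h => ?_⟩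
  · rw [Metric.mem_ball, Real.dist_eq, hflip]
    exact hN m hmN
  · rw [h, sub_self, abs_zero] at hflip
    exact hm (abs_eq_zero.mp hflip.symm)

theorem abs_subsum_sub_sum_le_tailSum (hx : Summable fun n => |x n|) (χ : ℕ → Bool) (n : ℕ) :
    |subsum x χ - ∑ i ∈ Finset.range (n + 1) with χ i, x i| ≤ tailSum x n := by
  have hχ := summable_ite_of_summable_abs hx χ
  have hχ' : Summable fun i => ‖if χ (i + (n + 1)) then x (i + (n + 1)) else 0‖ :=
    (summable_nat_add_iff (f := fun i => ‖if χ i then x i else 0‖) (n + 1)).mpr hχ.norm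
  have hx' : Summable fun i => |x (i + (n + 1))| :=
    (summable_nat_add_iff (f := fun i => |x i|) (n + 1)).mpr hx
  rw [subsum, ← hχ.sum_add_tsum_nat_add (n + 1), Finset.sum_filter, add_sub_cancel_left, tailSum]
  calc |∑' i, if χ (i + (n + 1)) then x (i + (n + 1)) else 0|
      ≤ ∑' i, ‖if χ (i + (n + 1)) then x (i + (n + 1)) else 0‖ := norm_tsum_le_tsum_norm hχ'
    _ ≤ ∑' i, |x (i + (n + 1))| :=
        hχ'.tsum_le_tsum (fun i => by by_cases h : χ (i + (n + 1)) <;> simp [h]) hx'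
    _ = ∑' i, |x (n + 1 + i)| := by simp only [add_comm _ (n + 1)]

theorem volume_achSet_le (hx : Summable fun n => |x n|) (n : ℕ) :
    volume (achSet x) ≤ ENNReal.ofReal (4 * (2 ^ n * tailSum x n)) := by
  have hcover : achSet x ⊆ ⋃ T ∈ (Finset.range (n + 1)).powerset,
      Metric.closedBall (∑ i ∈ T, x i) (tailSum x n) := by
    rw [achSet_eq_range_subsum hx]
    rintro _ ⟨χ, rfl⟩
    exact mem_biUnion (Finset.mem_powerset.mpr (Finset.filter_subset _ _))
      (abs_subsum_sub_sum_le_tailSum hx χ n)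
  calc volume (achSet x)
      ≤ ∑ T ∈ (Finset.range (n + 1)).powerset,
          volume (Metric.closedBall (∑ i ∈ T, x i) (tailSum x n)) :=
        (measure_mono hcover).trans (measure_biUnion_finset_le _ _)
    _ = ENNReal.ofReal (4 * (2 ^ n * tailSum x n)) := by
        simp only [Real.volume_closedBall, Finset.sum_const, Finset.card_powerset,
          Finset.card_range, nsmul_eq_mul]
        rw [← ENNReal.ofReal_natCast, ← ENNReal.ofReal_mul (by positivity)]
        congr 1
        push_cast
        ring

theorem volume_achSet_eq_zero (hx : Summable fun n => |x n|)
    (h : Tendsto (fun n => 2 ^ n * tailSum x n) atTop (𝓝 0)) : volume (achSet x) = 0 := by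
  have hlim := ENNReal.tendsto_ofReal (h.const_mul 4)
  rw [mul_zero, ENNReal.ofReal_zero] at hlim
  exact le_antisymm (ge_of_tendsto' hlim (volume_achSet_le hx)) zero_le

theorem cantorLike_achSet (hx : Summable fun n => |x n|) (hnz : NotEventuallyZero x)
    (hnull : volume (achSet x) = 0) : CantorLike (achSet x) :=
  IsBrouwerSet.cantorLike
    { nonempty := ⟨0, zero_mem_achSet x⟩
      isCompact := isCompact_achSet hx
      preperfect := preperfect_achSet hx hnz
      interior_eq_empty := Measure.interior_eq_empty_of_null hnull }

variable {K θ : ℝ}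

theorem summable_abs_of_abs_le_geometric (hθ0 : 0 ≤ θ) (hθ1 : θ < 1)
    (hb : ∀ n, |x n| ≤ K * θ ^ n) : Summable fun n => |x n| :=
  .of_nonneg_of_le (fun _ => abs_nonneg _) hb ((summable_geometric_of_lt_one hθ0 hθ1).mul_left K)

theorem tailSum_le_of_abs_le_geometric (hθ0 : 0 ≤ θ) (hθ1 : θ < 1)
    (hb : ∀ n, |x n| ≤ K * θ ^ n) (n : ℕ) : tailSum x n ≤ K * θ ^ (n + 1) / (1 - θ) := by
  have hgeom := summable_geometric_of_lt_one hθ0 hθ1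
  calc tailSum x n ≤ ∑' i, K * θ ^ (n + 1) * θ ^ i :=
        (summable_abs_of_abs_le_geometric hθ0 hθ1 hb).comp_injective (add_right_injective _)
          |>.tsum_le_tsum (fun i => (hb _).trans_eq (by ring)) (hgeom.mul_left _)
    _ = K * θ ^ (n + 1) / (1 - θ) := by
        rw [tsum_mul_left, tsum_geometric_of_lt_one hθ0 hθ1, div_eq_mul_inv]

theorem tendsto_two_pow_mul_tailSum (hθ0 : 0 ≤ θ) (hθ : θ < 1 / 2)
    (hb : ∀ n, |x n| ≤ K * θ ^ n) : Tendsto (fun n => 2 ^ n * tailSum x n) atTop (𝓝 0) := by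
  have hlim : Tendsto (fun n : ℕ => K * θ / (1 - θ) * (2 * θ) ^ n) atTop (𝓝 0) := by
    simpa using (tendsto_pow_atTop_nhds_zero_of_lt_one (by positivity) (by linarith)).const_mul
      (K * θ / (1 - θ))
  refine tendsto_of_tendsto_of_tendsto_of_le_of_le tendsto_const_nhds hlim
    (fun n => mul_nonneg (by positivity) (tsum_nonneg fun _ => abs_nonneg _)) fun n => ?_
  calc 2 ^ n * tailSum x n ≤ 2 ^ n * (K * θ ^ (n + 1) / (1 - θ)) :=
        mul_le_mul_of_nonneg_left (tailSum_le_of_abs_le_geometric hθ0 (by linarith) hb n)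
          (by positivity)
    _ = K * θ / (1 - θ) * (2 * θ) ^ n := by ring

theorem mem_mathcalC_of_abs_le_geometric (hθ0 : 0 ≤ θ) (hθ : θ < 1 / 2)
    (hb : ∀ n, |x n| ≤ K * θ ^ n) (hnz : NotEventuallyZero x) : x ∈ mathcalC := by
  have hx := summable_abs_of_abs_le_geometric hθ0 (by linarith) hb
  exact ⟨hx, hnz, cantorLike_achSet hx hnz
    (volume_achSet_eq_zero hx (tendsto_two_pow_mul_tailSum hθ0 hθ hb))⟩

end AchievementSet

theorem notEventuallyZero_sum_mul_pow {M : Type*} {s : Finset M} {c t : M → ℝ}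
    (hs : s.Nonempty) (hc : ∀ m ∈ s, c m ≠ 0) (ht : ∀ m ∈ s, t m ≠ 0) (hinj : Set.InjOn t s) :
    NotEventuallyZero fun n => ∑ m ∈ s, c m * t m ^ n := by
  intro N
  by_contra! hzero
  have hli : LinearIndependent ℝ fun m : s => ⇑(powersHom ℝ (t m)) :=
    (linearIndependent_monoidHom (Multiplicative ℕ) ℝ).comp _
      ((powersHom ℝ).injective.comp hinj.injective)
  have hsum : ∑ m : s, (c m * t m ^ N) • ⇑(powersHom ℝ (t m)) = 0 := by
    ext k
    simpa [Finset.sum_attach s fun m => c m * t m ^ (N + k.toAdd), mul_assoc, ← pow_add]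
      using hzero (N + k.toAdd) (by omega)
  obtain ⟨m, hm⟩ := hs
  have := Fintype.linearIndependent_iff.mp hli _ hsum ⟨m, hm⟩
  exact mul_ne_zero (hc m hm) (pow_ne_zero N (ht m hm)) this

theorem mem_mathcalC_sum_mul_pow {M : Type*} {s : Finset M} {c t : M → ℝ} {θ : ℝ}
    (hs : s.Nonempty) (hc : ∀ m ∈ s, c m ≠ 0) (ht : ∀ m ∈ s, t m ≠ 0) (hinj : Set.InjOn t s)
    (htθ : ∀ m ∈ s, |t m| ≤ θ) (hθ : θ < 1 / 2) :
    (fun n => ∑ m ∈ s, c m * t m ^ n) ∈ mathcalC := by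
  obtain ⟨m₀, hm₀⟩ := hs
  refine mem_mathcalC_of_abs_le_geometric (K := ∑ m ∈ s, |c m|) ((abs_nonneg _).trans (htθ m₀ hm₀))
    hθ (fun n => ?_) (notEventuallyZero_sum_mul_pow ⟨m₀, hm₀⟩ hc ht hinj)
  calc |∑ m ∈ s, c m * t m ^ n| ≤ ∑ m ∈ s, |c m| * |t m| ^ n := by
        simpa only [abs_mul, abs_pow] using Finset.abs_sum_le_sum_abs (fun m => c m * t m ^ n) s
    _ ≤ ∑ m ∈ s, |c m| * θ ^ n := Finset.sum_le_sum fun m hm => by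
        gcongr
        exact htθ m hm
    _ = (∑ m ∈ s, |c m|) * θ ^ n := (Finset.sum_mul ..).symm

namespace MvPolynomial

variable {ι : Type*}

theorem aeval_pow_apply {R : Type*} [CommSemiring R] (u : ι → R) (P : MvPolynomial ι R) (n : ℕ) :
    aeval (fun i (k : ℕ) => u i ^ k) P n =
      ∑ m ∈ P.support, coeff m P * (m.prod fun i k => u i ^ k) ^ n := by
  rw [← Pi.evalAlgHom_apply R (fun _ => R) n (aeval _ P), comp_aeval_apply, aeval_eq_eval, eval_eq]
  refine Finset.sum_congr rfl fun m _ => ?_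
  simp only [Pi.evalAlgHom_apply, Finsupp.prod, ← Finset.prod_pow, ← pow_mul, mul_comm n]

end MvPolynomial

theorem Finsupp.prod_rpow_pow_eq_rpow_weight {ι : Type*} {q : ℝ} (hq : 0 < q) (r : ι → ℝ)
    (m : ι →₀ ℕ) : (m.prod fun i k => (q ^ r i) ^ k) = q ^ weight r m := by
  rw [weight_apply, Finsupp.sum, Real.rpow_sum_of_pos hq, Finsupp.prod]
  refine Finset.prod_congr rfl fun i _ => ?_
  rw [nsmul_eq_mul, mul_comm, Real.rpow_mul_natCast hq.le]

theorem Finsupp.one_le_weight {ι : Type*} {r : ι → ℝ} (hr : ∀ i, 1 ≤ r i) {m : ι →₀ ℕ}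
    (hm : m ≠ 0) : 1 ≤ weight r m := by
  obtain ⟨i, hi⟩ := Finsupp.support_nonempty_iff.mpr hm
  have hmi : 1 ≤ m i := Nat.one_le_iff_ne_zero.mpr (Finsupp.mem_support_iff.mp hi)
  calc 1 ≤ r i := hr i
    _ ≤ m i • r i := by
        rw [nsmul_eq_mul]
        exact le_mul_of_one_le_left (zero_le_one.trans (hr i)) (Nat.one_le_cast.mpr hmi)
    _ ≤ weight r m := by
        rw [weight_apply, Finsupp.sum]
        exact Finset.single_le_sum (f := fun j => m j • r j)
          (fun j _ => nsmul_nonneg (zero_le_one.trans (hr j)) _) hi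

theorem LinearIndependent.weight_injective {ι : Type*} {r : ι → ℝ} (hli : LinearIndependent ℚ r) :
    Function.Injective (Finsupp.weight r : (ι →₀ ℕ) → ℝ) :=
  hli.restrict_scalars' ℕ

theorem aeval_rpow_mem_mathcalC {ι : Type*} {q : ℝ} (hq0 : 0 < q) (hq : q < 1 / 2) {r : ι → ℝ}
    (hr : ∀ i, 1 ≤ r i) (hli : LinearIndependent ℚ r) {P : MvPolynomial ι ℝ} (hP : P ≠ 0)
    (hP0 : MvPolynomial.constantCoeff P = 0) :
    MvPolynomial.aeval (fun i (n : ℕ) => q ^ (r i * n)) P ∈ mathcalC := by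
  have hgen : (fun i (n : ℕ) => q ^ (r i * n)) = fun i n => (q ^ r i) ^ n :=
    funext₂ fun i n => Real.rpow_mul_natCast hq0.le (r i) n
  have hinj : Function.Injective fun m => q ^ Finsupp.weight r m :=
    (Real.strictAnti_rpow_of_base_lt_one hq0 (by linarith)).injective.comp hli.weight_injective
  rw [hgen, funext (MvPolynomial.aeval_pow_apply _ P)]
  simp_rw [Finsupp.prod_rpow_pow_eq_rpow_weight hq0]
  refine mem_mathcalC_sum_mul_pow (MvPolynomial.support_nonempty.mpr hP)
    (fun m hm => MvPolynomial.mem_support_iff.mp hm) (fun m _ => (Real.rpow_pos_of_pos hq0 _).ne')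
    hinj.injOn (fun m hm => ?_) hq
  have hm0 : m ≠ 0 := by
    rintro rfl
    exact MvPolynomial.mem_support_iff.mp hm hP0
  rw [abs_of_pos (Real.rpow_pos_of_pos hq0 _)]
  simpa using Real.rpow_le_rpow_of_exponent_ge hq0 (by linarith) (Finsupp.one_le_weight hr hm0)

theorem mathcalC_strongly_algebrable (q : ℝ) (hq0 : 0 < q) (hq : q < 1 / 2)
    (ι : Type) (hι : Cardinal.mk ι = Cardinal.continuum)
    (r : ι → ℝ) (hr1 : ∀ i, 1 < r i) (hli : LinearIndependent ℚ r) :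
    (∀ P : MvPolynomial ι ℝ, P ≠ 0 → MvPolynomial.constantCoeff P = 0 →
        MvPolynomial.aeval (fun i => fun n : ℕ => q ^ (r i * n)) P ∈ mathcalC) ∧
      StronglyContinuumAlgebrable mathcalC := by
  have hmem : ∀ P : MvPolynomial ι ℝ, P ≠ 0 → MvPolynomial.constantCoeff P = 0 →
      MvPolynomial.aeval (fun i => fun n : ℕ => q ^ (r i * n)) P ∈ mathcalC :=
    fun _ hP hP0 => aeval_rpow_mem_mathcalC hq0 hq (fun i => (hr1 i).le) hli hP hP0
  exact ⟨hmem, ι, _, hι, hmem⟩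
end

section
/- Let K ⊂ (1, ∞) be a set of cardinality 𝔠 linearly independent over ℚ. The sequences x_α(n) = 1/n^α for α ∈ K freely generate a subalgebra of ℓ¹ every nonzero element of which has achievement set equal to a finite union of closed intervals. In particular, the set ℐ = {x ∈ ℓ¹ \ c₀₀ : E(x) is a finite union of closed intervals} is strongly 𝔠-algebrable. -/
open Set Filter Topology

/-- The set `ℐ` of absolutely summable, not eventually zero sequences whose
achievement set is a finite union of closed intervals. -/
def mathcalI : Set (ℕ → ℝ) :=
  {x | (Summable fun n => |x n|) ∧ NotEventuallyZero x ∧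
    IsFinUnionClosedIntervals (achSet x)}

/-!
Each nonzero element of the algebra is `f = ∑_d c_d (n+1)^{-⟨d, α⟩}` with `d` ranging over the
monomials of a polynomial `P` without constant term. Since the `α i` are linearly independent over
`ℚ`, the exponents `⟨d, α⟩` are distinct, so `f` is asymptotic to `c (n+1)^{-β}` with `c ≠ 0` and
`β > 1`. Such a sequence is absolutely summable, eventually of one sign, and each of its terms is
eventually dominated by the sum of the following ones. By Kakeya's theorem the achievement set of
the tail is then an interval, and the achievement set of `f` is a finite union of translates of it.
-/

open scoped Pointwise

lemma mem_achSet_iff {x : ℕ → ℝ} {a : ℝ} :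
    a ∈ achSet x ↔ ∃ A : Set ℕ, HasSum (A.indicator x) a :=
  exists_congr fun _ => hasSum_subtype_iff_indicator

lemma achSet_neg (x : ℕ → ℝ) : achSet (-x) = -achSet x := by
  ext a
  simp only [Set.mem_neg, mem_achSet_iff, indicator_neg']
  exact exists_congr fun A =>
    ⟨fun h => by simpa using h.neg, fun h => by rw [← neg_neg a]; exact h.neg⟩

lemma achSet_eq_union_image_add (x : ℕ → ℝ) :
    achSet x = achSet (fun n => x (n + 1)) ∪ (x 0 + ·) '' achSet (fun n => x (n + 1)) := by
  have hshift : ∀ (A : Set ℕ) (a : ℝ), HasSum (A.indicator x) a ↔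
      HasSum (((· + 1) ⁻¹' A).indicator fun n => x (n + 1)) (a - A.indicator x 0) := fun A a => by
    rw [← hasSum_nat_add_iff' 1, Finset.sum_range_one]
    exact Iff.rfl
  ext a
  simp only [mem_union, mem_image, mem_achSet_iff]
  constructor
  · rintro ⟨A, hA⟩
    rw [hshift] at hA
    by_cases h0 : 0 ∈ A
    · rw [indicator_of_mem h0] at hA
      exact Or.inr ⟨_, ⟨_, hA⟩, add_sub_cancel _ _⟩
    · rw [indicator_of_notMem h0, sub_zero] at hA
      exact Or.inl ⟨_, hA⟩
  · rintro (⟨B, hB⟩ | ⟨b, ⟨B, hB⟩, rfl⟩)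
    · refine ⟨(· + 1) '' B, (hshift _ _).2 ?_⟩
      simpa [preimage_image_eq B (add_left_injective 1)] using hB
    · refine ⟨insert 0 ((· + 1) '' B), (hshift _ _).2 ?_⟩
      have hpre : (· + 1) ⁻¹' insert 0 ((· + 1) '' B) = B := by ext; simp
      simpa [hpre] using hB

namespace IsFinUnionClosedIntervals

lemma Icc (a b : ℝ) : IsFinUnionClosedIntervals (Set.Icc a b) :=
  ⟨{(a, b)}, by simp⟩

lemma union {S T : Set ℝ} (hS : IsFinUnionClosedIntervals S) (hT : IsFinUnionClosedIntervals T) :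
    IsFinUnionClosedIntervals (S ∪ T) := by
  classical
  obtain ⟨s, rfl⟩ := hS
  obtain ⟨t, rfl⟩ := hT
  exact ⟨s ∪ t, (Finset.set_biUnion_union s t _).symm⟩

lemma image_const_add {S : Set ℝ} (hS : IsFinUnionClosedIntervals S) (c : ℝ) :
    IsFinUnionClosedIntervals ((c + ·) '' S) := by
  classical
  obtain ⟨s, rfl⟩ := hS
  refine ⟨s.image fun p => (c + p.1, c + p.2), ?_⟩
  simp only [Finset.set_biUnion_finset_image, image_iUnion₂, image_const_add_Icc]

lemma neg {S : Set ℝ} (hS : IsFinUnionClosedIntervals S) : IsFinUnionClosedIntervals (-S) := by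
  classical
  obtain ⟨s, rfl⟩ := hS
  refine ⟨s.image fun p => (-p.2, -p.1), ?_⟩
  simp only [Finset.set_biUnion_finset_image, iUnion_neg, neg_Icc]

end IsFinUnionClosedIntervals

lemma isFinUnionClosedIntervals_achSet_of_shift {x : ℕ → ℝ} (N : ℕ)
    (h : IsFinUnionClosedIntervals (achSet fun n => x (n + N))) :
    IsFinUnionClosedIntervals (achSet x) := by
  induction N generalizing x with
  | zero => exact h
  | succ N ih =>
    have hx := ih (x := fun n => x (n + 1)) h
    rw [achSet_eq_union_image_add]
    exact hx.union (hx.image_const_add _)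

section Kakeya

noncomputable def greedySum (y : ℕ → ℝ) (t : ℝ) : ℕ → ℝ
  | 0 => 0
  | n + 1 => greedySum y t n + if greedySum y t n + y n ≤ t then y n else 0

variable {y : ℕ → ℝ} {t : ℝ}

lemma greedySum_eq_sum_indicator (n : ℕ) :
    greedySum y t n = ∑ k ∈ Finset.range n, {k | greedySum y t k + y k ≤ t}.indicator y k := by
  induction n with
  | zero => rfl
  | succ n ih => rw [Finset.sum_range_succ, ← ih]; rfl

lemma greedySum_le (ht : 0 ≤ t) (n : ℕ) : greedySum y t n ≤ t := by
  induction n with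
  | zero => exact ht
  | succ n ih =>
    rw [greedySum]
    split_ifs with h
    · exact h
    · simpa using ih

lemma le_greedySum_add_tsum (hs : Summable y) (hy : ∀ n, y n ≤ ∑' k, y (k + (n + 1)))
    (ht : t ≤ ∑' k, y k) (n : ℕ) : t ≤ greedySum y t n + ∑' k, y (k + n) := by
  induction n with
  | zero => simpa [greedySum] using ht
  | succ n ih =>
    have hsplit : ∑' k, y (k + n) = y n + ∑' k, y (k + (n + 1)) := by
      rw [((summable_nat_add_iff n).2 hs).tsum_eq_zero_add, zero_add]
      simp only [add_right_comm _ 1 n, add_assoc]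
    rw [greedySum]
    split_ifs with h
    · linarith
    · linarith [hy n, not_le.1 h]

/-- Kakeya's interval theorem; a preimage of `t` is found by the greedy algorithm. -/
theorem achSet_eq_Icc_of_le_tailSum (hy : ∀ n, 0 ≤ y n) (hs : Summable y)
    (h : ∀ n, y n ≤ tailSum y n) : achSet y = Icc 0 (∑' n, y n) := by
  refine Subset.antisymm (fun a ha => ?_) (fun t ht => ?_)
  · obtain ⟨A, hA⟩ := mem_achSet_iff.1 ha
    exact ⟨hA.nonneg (indicator_nonneg fun n _ => hy n),
      hasSum_le (indicator_le_self' fun n _ => hy n) hA hs.hasSum⟩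
  have htail : ∀ n, y n ≤ ∑' k, y (k + (n + 1)) := fun n => by
    simpa only [tailSum, abs_of_nonneg (hy _), add_comm (n + 1)] using h n
  have hlim : Tendsto (greedySum y t) atTop (𝓝 t) :=
    tendsto_of_tendsto_of_tendsto_of_le_of_le
      (by simpa using tendsto_const_nhds.sub (tendsto_sum_nat_add y)) tendsto_const_nhds
      (fun n => by linarith [le_greedySum_add_tsum hs htail ht.2 n]) (greedySum_le ht.1)
  set A : Set ℕ := {k | greedySum y t k + y k ≤ t}
  have hA : HasSum (A.indicator y) t := by
    have hsum := (hs.indicator A).hasSum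
    rwa [tendsto_nhds_unique (hsum.tendsto_sum_nat.congr fun n =>
      (greedySum_eq_sum_indicator n).symm) hlim] at hsum
  exact mem_achSet_iff.2 ⟨A, hA⟩

end Kakeya

theorem isFinUnionClosedIntervals_achSet_of_eventually_le_tailSum {x : ℕ → ℝ} (hs : Summable x)
    (h : ∀ᶠ n in atTop, 0 ≤ x n ∧ x n ≤ tailSum x n) :
    IsFinUnionClosedIntervals (achSet x) := by
  obtain ⟨N, hN⟩ := eventually_atTop.1 h
  refine isFinUnionClosedIntervals_achSet_of_shift N ?_
  rw [achSet_eq_Icc_of_le_tailSum (fun n => (hN _ (Nat.le_add_left N n)).1)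
    ((summable_nat_add_iff N).2 hs)]
  · exact IsFinUnionClosedIntervals.Icc _ _
  · intro n
    simpa only [tailSum, add_right_comm _ N] using (hN _ (Nat.le_add_left N n)).2

lemma notEventuallyZero_iff_frequently {x : ℕ → ℝ} :
    NotEventuallyZero x ↔ ∃ᶠ n in atTop, x n ≠ 0 :=
  frequently_atTop.symm

lemma neg_mem_mathcalI {x : ℕ → ℝ} (hx : x ∈ mathcalI) : -x ∈ mathcalI := by
  obtain ⟨hs, hne, hI⟩ := hx
  refine ⟨by simpa using hs, ?_, by simpa only [achSet_neg] using hI.neg⟩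
  rw [notEventuallyZero_iff_frequently] at hne ⊢
  simpa using hne

section Asymptotics

variable {f : ℕ → ℝ} {β c : ℝ}

lemma summable_abs_of_tendsto_rpow_mul (hβ : 1 < β)
    (hf : Tendsto (fun n : ℕ => ((n : ℝ) + 1) ^ β * f n) atTop (𝓝 c)) :
    Summable fun n => |f n| := by
  have hO : f =O[atTop] fun n : ℕ => ((n : ℝ) + 1) ^ (-β) := by
    have := (Asymptotics.isBigO_refl (fun n : ℕ => ((n : ℝ) + 1) ^ (-β)) atTop).mul
      (hf.isBigO_one ℝ)
    refine (this.congr_left fun n => ?_).congr_right fun n => mul_one _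
    rw [← mul_assoc, ← Real.rpow_add (by positivity), neg_add_cancel, Real.rpow_zero, one_mul]
  have hsum : Summable fun n : ℕ => ((n : ℝ) + 1) ^ (-β) := by
    simpa using (summable_nat_add_iff 1).2 (Real.summable_nat_rpow.2 (neg_lt_neg hβ))
  exact (summable_of_isBigO_nat hsum hO).abs

lemma eventually_pos_of_tendsto_rpow_mul (hc : 0 < c)
    (hf : Tendsto (fun n : ℕ => ((n : ℝ) + 1) ^ β * f n) atTop (𝓝 c)) :
    ∀ᶠ n in atTop, 0 < f n :=
  (hf.eventually_const_lt hc).mono fun n hn => pos_of_mul_pos_right hn (by positivity)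

lemma eventually_le_tailSum_of_tendsto_rpow_mul (hβ : 0 ≤ β) (hc : 0 < c)
    (hs : Summable fun n => |f n|)
    (hf : Tendsto (fun n : ℕ => ((n : ℝ) + 1) ^ β * f n) atTop (𝓝 c)) :
    ∀ᶠ n in atTop, f n ≤ tailSum f n := by
  have hbounds : ∀ᶠ n : ℕ in atTop,
      c / 2 * ((n : ℝ) + 1) ^ (-β) ≤ f n ∧ f n ≤ 2 * c * ((n : ℝ) + 1) ^ (-β) := by
    filter_upwards [hf.eventually (Icc_mem_nhds (half_lt_self hc) (by linarith : c < 2 * c))]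
      with n hn
    have hpos : 0 < ((n : ℝ) + 1) ^ β := by positivity
    rw [Real.rpow_neg (by positivity), ← div_eq_mul_inv, ← div_eq_mul_inv, le_div_iff₀ hpos,
      div_le_iff₀ hpos, mul_comm (f n)]
    exact hn
  obtain ⟨N, hN⟩ := eventually_atTop.1 hbounds
  have hlarge : ∀ᶠ n : ℕ in atTop, 4 * (2 : ℝ) ^ β ≤ (n : ℝ) + 1 :=
    (tendsto_atTop_add_const_right _ 1 tendsto_natCast_atTop_atTop).eventually_ge_atTop _
  filter_upwards [eventually_ge_atTop N, hlarge] with n hn hn'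
  set u := ((n : ℝ) + 1) ^ (-β)
  -- the `n + 1` terms after `f n` have indices `≤ 2n + 1`, so each is `≥ (c/2) 2^{-β} u`
  have hterm : ∀ i ∈ Finset.range (n + 1), c / 2 * (2 ^ (-β) * u) ≤ |f (n + 1 + i)| := by
    intro i hi
    have hi : (i : ℝ) ≤ n := by exact_mod_cast Nat.lt_succ_iff.1 (Finset.mem_range.1 hi)
    have hmono : 2 ^ (-β) * u ≤ (((n + 1 + i : ℕ) : ℝ) + 1) ^ (-β) := by
      rw [← Real.mul_rpow (by norm_num) (by positivity)]
      exact Real.rpow_le_rpow_of_nonpos (by positivity) (by push_cast; linarith) (by linarith)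
    calc c / 2 * (2 ^ (-β) * u) ≤ c / 2 * (((n + 1 + i : ℕ) : ℝ) + 1) ^ (-β) := by gcongr
      _ ≤ f (n + 1 + i) := (hN _ (by omega)).1
      _ ≤ |f (n + 1 + i)| := le_abs_self _
  have h2 : (2 : ℝ) ^ β * 2 ^ (-β) = 1 := by
    rw [← Real.rpow_add two_pos, add_neg_cancel, Real.rpow_zero]
  calc f n ≤ 2 * c * u := (hN n hn).2
    _ = 4 * 2 ^ β * (c / 2 * (2 ^ (-β) * u)) := by linear_combination (-2 * c * u) * h2
    _ ≤ (n + 1) * (c / 2 * (2 ^ (-β) * u)) := by gcongr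
    _ = ∑ i ∈ Finset.range (n + 1), c / 2 * (2 ^ (-β) * u) := by simp
    _ ≤ ∑ i ∈ Finset.range (n + 1), |f (n + 1 + i)| := Finset.sum_le_sum hterm
    _ ≤ tailSum f n :=
      (hs.comp_injective (add_right_injective (n + 1))).sum_le_tsum _ fun _ _ => abs_nonneg _

theorem mem_mathcalI_of_tendsto_rpow_mul (hβ : 1 < β) (hc : c ≠ 0)
    (hf : Tendsto (fun n : ℕ => ((n : ℝ) + 1) ^ β * f n) atTop (𝓝 c)) : f ∈ mathcalI := by
  wlog hcpos : 0 < c generalizing f c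
  · simpa using neg_mem_mathcalI (this (f := -f) (neg_ne_zero.2 hc)
      (by simpa using hf.neg) (by linarith [lt_of_le_of_ne (not_lt.1 hcpos) hc]))
  have hs := summable_abs_of_tendsto_rpow_mul hβ hf
  have hfpos := eventually_pos_of_tendsto_rpow_mul hcpos hf
  refine ⟨hs, notEventuallyZero_iff_frequently.2 (hfpos.mono fun n h => h.ne').frequently, ?_⟩
  refine isFinUnionClosedIntervals_achSet_of_eventually_le_tailSum hs.of_abs ?_
  filter_upwards [hfpos, eventually_le_tailSum_of_tendsto_rpow_mul (by linarith) hcpos hs hf]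
    with n h₀ h₁
  exact ⟨h₀.le, h₁⟩

end Asymptotics

lemma tendsto_rpow_mul_sum_rpow_neg {κ : Type*} (s : Finset κ) (c e : κ → ℝ) {d₀ : κ}
    (hd₀ : d₀ ∈ s) (hmin : ∀ d ∈ s, d ≠ d₀ → e d₀ < e d) :
    Tendsto (fun x : ℝ => x ^ e d₀ * ∑ d ∈ s, c d * x ^ (-e d)) atTop (𝓝 (c d₀)) := by
  classical
  have hlim : ∀ d ∈ s, Tendsto (fun x : ℝ => c d * x ^ (e d₀ - e d)) atTop
      (𝓝 (if d = d₀ then c d else 0)) := by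
    intro d hd
    split_ifs with h
    · simp [h]
    · simpa using (tendsto_rpow_neg_atTop (sub_pos.2 (hmin d hd h))).const_mul (c d)
  have hsum := tendsto_finsetSum s hlim
  rw [Finset.sum_ite_eq', if_pos hd₀] at hsum
  refine hsum.congr' ?_
  filter_upwards [eventually_gt_atTop 0] with x hx
  rw [Finset.mul_sum]
  refine Finset.sum_congr rfl fun d _ => ?_
  rw [sub_eq_add_neg, Real.rpow_add hx]
  ring

lemma MvPolynomial.aeval_pi_apply {ι κ R : Type*} [CommSemiring R] (y : ι → κ → R)
    (P : MvPolynomial ι R) (k : κ) :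
    MvPolynomial.aeval y P k = MvPolynomial.eval (fun i => y i k) P := by
  rw [← MvPolynomial.coe_aeval_eq_eval]
  exact MvPolynomial.comp_aeval_apply y (Pi.evalAlgHom R (fun _ => R) k) P

lemma eval_one_div_rpow {ι : Type*} (α : ι → ℝ) (P : MvPolynomial ι ℝ) {x : ℝ} (hx : 0 < x) :
    MvPolynomial.eval (fun i => 1 / x ^ α i) P =
      ∑ d ∈ P.support, MvPolynomial.coeff d P * x ^ (-Finsupp.linearCombination ℕ α d) := by
  rw [MvPolynomial.eval_eq]
  refine Finset.sum_congr rfl fun d _ => ?_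
  rw [Finsupp.linearCombination_apply, Finsupp.sum, ← Finset.sum_neg_distrib,
    Real.rpow_sum_of_pos hx]
  congr 1
  refine Finset.prod_congr rfl fun i _ => ?_
  rw [one_div, ← Real.rpow_neg hx.le, ← Real.rpow_mul_natCast hx.le, nsmul_eq_mul]
  ring_nf

lemma one_lt_linearCombination_nat {ι : Type*} {α : ι → ℝ} (hα : ∀ i, 1 < α i)
    {d : ι →₀ ℕ} (hd : d ≠ 0) : 1 < Finsupp.linearCombination ℕ α d := by
  obtain ⟨i, hi⟩ := Finsupp.support_nonempty_iff.2 hd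
  rw [Finsupp.linearCombination_apply, Finsupp.sum]
  calc 1 < α i := hα i
    _ ≤ d i • α i :=
      le_smul_of_one_le_left (zero_le_one.trans (hα i).le)
        (Nat.one_le_iff_ne_zero.2 (Finsupp.mem_support_iff.1 hi))
    _ ≤ ∑ j ∈ d.support, d j • α j :=
      Finset.single_le_sum (fun j _ => nsmul_nonneg (zero_le_one.trans (hα j).le) _) hi

theorem aeval_one_div_rpow_mem_mathcalI {ι : Type*} {α : ι → ℝ} (hα : ∀ i, 1 < α i)
    (hli : LinearIndependent ℚ α) {P : MvPolynomial ι ℝ} (hP : P ≠ 0)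
    (h0 : MvPolynomial.constantCoeff P = 0) :
    MvPolynomial.aeval (fun i (n : ℕ) => 1 / ((n : ℝ) + 1) ^ α i) P ∈ mathcalI := by
  set w := Finsupp.linearCombination ℕ α
  have hw : Function.Injective w := hli.restrict_scalars' ℕ
  obtain ⟨d₀, hd₀, hmin⟩ := P.support.exists_min_image w
    (Finset.nonempty_of_ne_empty (mt MvPolynomial.support_eq_empty.1 hP))
  have hd₀0 : d₀ ≠ 0 := by
    rintro rfl
    exact MvPolynomial.mem_support_iff.1 hd₀ (by rwa [← MvPolynomial.constantCoeff_eq])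
  refine mem_mathcalI_of_tendsto_rpow_mul (one_lt_linearCombination_nat hα hd₀0)
    (MvPolynomial.mem_support_iff.1 hd₀) ?_
  have hlead := (tendsto_rpow_mul_sum_rpow_neg P.support (MvPolynomial.coeff · P) w hd₀
    fun d hd hne => (hmin d hd).lt_of_ne (hw.ne hne).symm).comp
    (tendsto_atTop_add_const_right _ 1 tendsto_natCast_atTop_atTop)
  refine hlead.congr fun n => ?_
  simp only [Function.comp, w, MvPolynomial.aeval_pi_apply,
    eval_one_div_rpow α P (by positivity : (0 : ℝ) < n + 1)]

theorem mathcalI_strongly_algebrable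
    (ι : Type) (hι : Cardinal.mk ι = Cardinal.continuum)
    (α : ι → ℝ) (hα1 : ∀ i, 1 < α i) (hli : LinearIndependent ℚ α) :
    (∀ P : MvPolynomial ι ℝ, P ≠ 0 → MvPolynomial.constantCoeff P = 0 →
        MvPolynomial.aeval (fun i => fun n : ℕ => 1 / ((n : ℝ) + 1) ^ (α i)) P ∈ mathcalI) ∧
      StronglyContinuumAlgebrable mathcalI := by
  have h := fun P (hP : P ≠ 0) h0 => aeval_one_div_rpow_mem_mathcalI hα1 hli hP h0
  exact ⟨h, ι, _, hι, h⟩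
end
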